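/- In the basic justification logic J with axiomatically appropriate constant specification CS (Lifting Lemma): if F is derivable in J_CS from hypotheses A₁, ..., Aₙ, then there exist a justification term t built from variables x₁, ..., xₙ such that t:F is derivable in J_CS from hypotheses x₁:A₁, ..., xₙ:Aₙ. -/

import Mathlib

/-- Justification terms of the basic justification logic J: variables,
constants, application `·` and sum `+`. -/
inductive Tm : Type
  | var : ℕ → Tm
  | const : ℕ → Tm
  | app : Tm → Tm → Tm
  | sum : Tm → Tm → Tm

/-- The justification variables occurring in a term. -/
def Tm.vars : Tm → Finset ℕ
  | .var x => {x}
  | .const _ => ∅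
  | .app s t => s.vars ∪ t.vars
  | .sum s t => s.vars ∪ t.vars

/-- Formulas of the basic justification logic J. -/
inductive Fm : Type
  | atom : ℕ → Fm
  | bot : Fm
  | imp : Fm → Fm → Fm
  | just : Tm → Fm → Fm

namespace Fm

def neg (A : Fm) : Fm := imp A bot

end Fm

open Fm

/-- Axiom instances of J: propositional tautologies (via a Hilbert basis),
Sum and jK. -/
inductive JAx : Fm → Prop
  | ax1 (A B : Fm) : JAx (imp A (imp B A))
  | ax2 (A B C : Fm) : JAx (imp (imp A (imp B C)) (imp (imp A B) (imp A C)))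
  | ax3 (A B : Fm) : JAx (imp (imp (neg A) (neg B)) (imp B A))
  | sum1 (s t : Tm) (A : Fm) : JAx (imp (.just s A) (.just (.sum s t) A))
  | sum2 (s t : Tm) (A : Fm) : JAx (imp (.just s A) (.just (.sum t s) A))
  | jk (s t : Tm) (A B : Fm) :
      JAx (imp (.just s (imp A B)) (imp (.just t A) (.just (.app s t) B)))

/-- Derivability in J_CS from a list of hypotheses: hypotheses, axiom
instances, members of the constant specification (the iterated axiom
necessitation rule IAN), and modus ponens. -/
inductive Deriv (CS : Fm → Prop) (Γ : List Fm) : Fm → Prop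
  | hyp {A : Fm} : A ∈ Γ → Deriv CS Γ A
  | axm {A : Fm} : JAx A → Deriv CS Γ A
  | cs {A : Fm} : CS A → Deriv CS Γ A
  | mp {A B : Fm} : Deriv CS Γ (imp A B) → Deriv CS Γ A → Deriv CS Γ B

/-! Induction on the derivation: hypotheses are lifted by their variables, axioms and
members of `CS` by the constants that axiomatic appropriateness provides, and modus ponens
by the application term, using the axiom jK. -/

namespace Deriv

variable {CS : Fm → Prop}

theorem just_app {Γ : List Fm} {s t : Tm} {A B : Fm} (hs : Deriv CS Γ (.just s (imp A B)))
    (ht : Deriv CS Γ (.just t A)) : Deriv CS Γ (.just (.app s t) B) :=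
  mp (mp (axm (JAx.jk s t A B)) hs) ht

theorem just_var_getElem (Γ : List Fm) {i : ℕ} (hi : i < Γ.length) :
    Deriv CS (Γ.mapIdx fun i A => .just (.var i) A) (.just (.var i) Γ[i]) :=
  hyp (List.mem_iff_getElem.mpr ⟨i, by simpa using hi, by simp⟩)

end Deriv

/-- The Lifting Lemma for the basic justification logic J with an axiomatically
appropriate constant specification CS: if `F` is derivable from hypotheses
`A₁, …, Aₙ`, then there is a justification term `t` built from the variables
`x₁, …, xₙ` such that `t:F` is derivable from `x₁:A₁, …, xₙ:Aₙ`. -/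
theorem lifting_lemma
    (CS : Fm → Prop)
    (hCSax : ∀ A, JAx A → ∃ c : ℕ, CS (.just (.const c) A))
    (hCSiter : ∀ F, CS F → ∃ c : ℕ, CS (.just (.const c) F))
    (Γ : List Fm) (F : Fm)
    (h : Deriv CS Γ F) :
    ∃ t : Tm, (∀ i ∈ t.vars, i < Γ.length) ∧
      Deriv CS (Γ.mapIdx fun i A => Fm.just (Tm.var i) A) (Fm.just t F) := by
  induction h with
  | @hyp A hA =>
    obtain ⟨i, hi, rfl⟩ := List.mem_iff_getElem.mp hA
    exact ⟨.var i, by simpa [Tm.vars] using hi, Deriv.just_var_getElem Γ hi⟩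
  | @axm A hA =>
    obtain ⟨c, hc⟩ := hCSax A hA
    exact ⟨.const c, by simp [Tm.vars], .cs hc⟩
  | @cs A hA =>
    obtain ⟨c, hc⟩ := hCSiter A hA
    exact ⟨.const c, by simp [Tm.vars], .cs hc⟩
  | mp _ _ ihAB ihA =>
    obtain ⟨s, hs, ds⟩ := ihAB
    obtain ⟨t, ht, dt⟩ := ihA
    refine ⟨.app s t, ?_, ds.just_app dt⟩
    simp only [Tm.vars, Finset.mem_union]
    rintro i (hi | hi)
    exacts [hs i hi, ht i hi]
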